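/- The BRP approximation error equals a projection residual: with A₂ = XA₁ and the updated A₁' = XᵀA₂ = XᵀXA₁, and L = Y₁(A₂ᵀY₁)⁻¹Y₂ᵀ where Y₁ = XA₁', Y₂ = XᵀA₂, one has ‖X − L‖ = ‖Λ(I − P_M)‖ where M = Λ²VᵀA₁, P_M is the orthogonal projector onto range(M), and X = UΛVᵀ is an SVD with U, V orthogonal. -/

import Mathlib

open Matrix MeasureTheory ProbabilityTheory

noncomputable def specNorm {m n : Type*} [Fintype m] [Fintype n] [DecidableEq n]
    (A : Matrix m n ℝ) : ℝ :=
  ‖(Matrix.toEuclideanLin A).toContinuousLinearMap‖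

noncomputable def frobNorm {m n : Type*} [Fintype m] [Fintype n] (A : Matrix m n ℝ) : ℝ :=
  Real.sqrt (∑ i, ∑ j, (A i j) ^ 2)

/-- Moore–Penrose pseudoinverse of a full-row-rank matrix: `B† = Bᵀ (B Bᵀ)⁻¹`. -/
noncomputable def pinvFR {r k : Type*} [Fintype r] [Fintype k] [DecidableEq r]
    (B : Matrix r k ℝ) : Matrix k r ℝ :=
  Bᵀ * (B * Bᵀ)⁻¹

instance matMS (m n : ℕ) : MeasurableSpace (Matrix (Fin m) (Fin n) ℝ) :=
  (inferInstance : MeasurableSpace (Fin m → Fin n → ℝ))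

/-- The law of an `m × n` random matrix with i.i.d. standard Gaussian entries. -/
noncomputable def stdGaussian (m n : ℕ) : Measure (Matrix (Fin m) (Fin n) ℝ) :=
  (Measure.pi fun _ : Fin m => Measure.pi fun _ : Fin n => gaussianReal 0 1 :
    Measure (Fin m → Fin n → ℝ))

/-! With `X = U Λ Vᵀ` and `M = Λ² Vᵀ A₁`, the sketches are `Y₂ = XᵀX A₁ = V M` and
`Y₁ = X Y₂ = U Λ M`, and the core matrix is the Gram matrix `A₂ᵀ Y₁ = Mᵀ M`. Hence
`X - Y₁ (A₂ᵀ Y₁)⁻¹ Y₂ᵀ = U (Λ (I - P_M)) Vᵀ`, and the spectral norm ignores the factors `U` and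
`Vᵀ` because `U` and `V` have orthonormal columns. -/

open scoped Matrix.Norms.L2Operator

theorem specNorm_eq_l2_opNorm {m n : Type*} [Fintype m] [Fintype n] [DecidableEq n]
    (A : Matrix m n ℝ) : specNorm A = ‖A‖ := rfl

namespace Matrix

variable {m n k : Type*} [Fintype m] [Fintype n] [Fintype k] [DecidableEq n] [DecidableEq k]

theorem l2_opNorm_le_one_of_transpose_mul_self_eq_one {U : Matrix m n ℝ} (hU : Uᵀ * U = 1) :
    ‖U‖ ≤ 1 := by
  have hsq := l2_opNorm_conjTranspose_mul_self U
  rw [conjTranspose_eq_transpose_of_trivial, hU] at hsq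
  have h_one : ‖(1 : Matrix n n ℝ)‖ ≤ 1 := by
    rw [← l2_opNorm_toEuclideanCLM, map_one]
    exact ContinuousLinearMap.norm_id_le
  nlinarith [norm_nonneg U]

theorem l2_opNorm_mul_of_transpose_mul_self_eq_one [DecidableEq m] {U : Matrix m n ℝ}
    (hU : Uᵀ * U = 1) (B : Matrix n k ℝ) : ‖U * B‖ = ‖B‖ := by
  have hU₁ := l2_opNorm_le_one_of_transpose_mul_self_eq_one hU
  apply le_antisymm
  · calc ‖U * B‖ ≤ ‖U‖ * ‖B‖ := l2_opNorm_mul U B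
      _ ≤ ‖B‖ := mul_le_of_le_one_left (norm_nonneg B) hU₁
  · calc ‖B‖ = ‖Uᵀ * (U * B)‖ := by rw [← Matrix.mul_assoc, hU, Matrix.one_mul]
      _ ≤ ‖Uᵀ‖ * ‖U * B‖ := l2_opNorm_mul Uᵀ (U * B)
      _ ≤ ‖U * B‖ := by
        rw [← conjTranspose_eq_transpose_of_trivial, l2_opNorm_conjTranspose]
        exact mul_le_of_le_one_left (norm_nonneg _) hU₁

theorem l2_opNorm_mul_transpose_of_transpose_mul_self_eq_one {V : Matrix k n ℝ}
    (hV : Vᵀ * V = 1) (B : Matrix m n ℝ) : ‖B * Vᵀ‖ = ‖B‖ := by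
  have hV₁ := l2_opNorm_le_one_of_transpose_mul_self_eq_one hV
  have hVt : ‖Vᵀ‖ = ‖V‖ := by
    rw [← conjTranspose_eq_transpose_of_trivial, l2_opNorm_conjTranspose]
  apply le_antisymm
  · calc ‖B * Vᵀ‖ ≤ ‖B‖ * ‖Vᵀ‖ := l2_opNorm_mul B Vᵀ
      _ ≤ ‖B‖ := mul_le_of_le_one_right (norm_nonneg B) (hVt ▸ hV₁)
  · calc ‖B‖ = ‖B * Vᵀ * V‖ := by rw [Matrix.mul_assoc, hV, Matrix.mul_one]
      _ ≤ ‖B * Vᵀ‖ * ‖V‖ := l2_opNorm_mul (B * Vᵀ) V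
      _ ≤ ‖B * Vᵀ‖ := mul_le_of_le_one_right (norm_nonneg _) hV₁

end Matrix

section SVD

variable {m n k : Type*} [Fintype m] [Fintype n] [DecidableEq n]
  {U : Matrix m n ℝ} {S V : Matrix n n ℝ} {X : Matrix m n ℝ}

theorem transpose_mul_mul_cancel (hU : Uᵀ * U = 1) (C : Matrix n k ℝ) : Uᵀ * (U * C) = C := by
  rw [← Matrix.mul_assoc, hU, Matrix.one_mul]

theorem transpose_mul_mul_of_svd (hX : X = U * S * Vᵀ) (hU : Uᵀ * U = 1) (A : Matrix n k ℝ) :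
    Xᵀ * (X * A) = V * (Sᵀ * S * Vᵀ * A) := by
  subst hX
  simp only [transpose_mul, transpose_transpose, Matrix.mul_assoc, transpose_mul_mul_cancel hU]

theorem mul_transpose_mul_mul_of_svd (hX : X = U * S * Vᵀ) (hU : Uᵀ * U = 1) (hV : Vᵀ * V = 1)
    (A : Matrix n k ℝ) : X * (Xᵀ * (X * A)) = U * (S * (Sᵀ * S * Vᵀ * A)) := by
  rw [transpose_mul_mul_of_svd hX hU, hX]
  simp only [Matrix.mul_assoc, transpose_mul_mul_cancel hV]

theorem brp_core_eq_gram_of_svd (hX : X = U * S * Vᵀ) (hU : Uᵀ * U = 1) (hV : Vᵀ * V = 1)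
    (A : Matrix n k ℝ) :
    (X * A)ᵀ * (X * (Xᵀ * (X * A))) = (Sᵀ * S * Vᵀ * A)ᵀ * (Sᵀ * S * Vᵀ * A) := by
  rw [mul_transpose_mul_mul_of_svd hX hU hV, hX]
  simp only [transpose_mul, transpose_transpose, Matrix.mul_assoc, transpose_mul_mul_cancel hU]

theorem brp_error_eq_of_svd [Fintype k] [DecidableEq k] (hX : X = U * S * Vᵀ) (hU : Uᵀ * U = 1)
    (hV : Vᵀ * V = 1) {A M : Matrix n k ℝ} (hM : M = Sᵀ * S * Vᵀ * A) :
    X - X * (Xᵀ * (X * A)) * ((X * A)ᵀ * (X * (Xᵀ * (X * A))))⁻¹ * (Xᵀ * (X * A))ᵀ =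
      U * (S * (1 - M * (Mᵀ * M)⁻¹ * Mᵀ)) * Vᵀ := by
  rw [brp_core_eq_gram_of_svd hX hU hV, mul_transpose_mul_mul_of_svd hX hU hV,
    transpose_mul_mul_of_svd hX hU, ← hM, hX]
  simp only [transpose_mul, Matrix.mul_sub, Matrix.sub_mul, Matrix.mul_one, Matrix.mul_assoc]

end SVD

theorem brp_error_eq_proj_residual_general {m n r p : ℕ}
    (U : Matrix (Fin m) (Fin n) ℝ) (V : Matrix (Fin n) (Fin n) ℝ) (Λ : Fin n → ℝ)
    (hU : Uᵀ * U = 1) (hV : Vᵀ * V = 1)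
    (X : Matrix (Fin m) (Fin n) ℝ) (hX : X = U * Matrix.diagonal Λ * Vᵀ)
    (A₁ : Matrix (Fin n) (Fin (r + p)) ℝ)
    (A₂ : Matrix (Fin m) (Fin (r + p)) ℝ) (hA₂ : A₂ = X * A₁)
    (A₁' : Matrix (Fin n) (Fin (r + p)) ℝ) (hA₁' : A₁' = Xᵀ * A₂)
    (Y₁ : Matrix (Fin m) (Fin (r + p)) ℝ) (hY₁ : Y₁ = X * A₁')
    (Y₂ : Matrix (Fin n) (Fin (r + p)) ℝ) (hY₂ : Y₂ = Xᵀ * A₂)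
    (M : Matrix (Fin n) (Fin (r + p)) ℝ)
    (hM : M = Matrix.diagonal Λ * Matrix.diagonal Λ * Vᵀ * A₁) :
    specNorm (X - Y₁ * (A₂ᵀ * Y₁)⁻¹ * Y₂ᵀ) =
      specNorm (Matrix.diagonal Λ * (1 - M * (Mᵀ * M)⁻¹ * Mᵀ)) := by
  have hM' : M = (diagonal Λ)ᵀ * diagonal Λ * Vᵀ * A₁ := by rw [diagonal_transpose, hM]
  subst hY₁ hA₁' hY₂ hA₂
  rw [brp_error_eq_of_svd hX hU hV hM', specNorm_eq_l2_opNorm, specNorm_eq_l2_opNorm,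
    l2_opNorm_mul_transpose_of_transpose_mul_self_eq_one hV,
    l2_opNorm_mul_of_transpose_mul_self_eq_one hU]

/-- The BRP approximation error equals the projection residual  with
. -/
theorem brp_error_eq_proj_residual {m n r p : ℕ} (hmn : n ≤ m)
    (U : Matrix (Fin m) (Fin n) ℝ) (V : Matrix (Fin n) (Fin n) ℝ) (Λ : Fin n → ℝ)
    (hΛ : ∀ i, 0 ≤ Λ i) (hU : Uᵀ * U = 1) (hV : Vᵀ * V = 1) (hV' : V * Vᵀ = 1)
    (X : Matrix (Fin m) (Fin n) ℝ) (hX : X = U * Matrix.diagonal Λ * Vᵀ)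
    (A₁ : Matrix (Fin n) (Fin (r + p)) ℝ)
    (A₂ : Matrix (Fin m) (Fin (r + p)) ℝ) (hA₂ : A₂ = X * A₁)
    (A₁' : Matrix (Fin n) (Fin (r + p)) ℝ) (hA₁' : A₁' = Xᵀ * A₂)
    (Y₁ : Matrix (Fin m) (Fin (r + p)) ℝ) (hY₁ : Y₁ = X * A₁')
    (Y₂ : Matrix (Fin n) (Fin (r + p)) ℝ) (hY₂ : Y₂ = Xᵀ * A₂)
    (hinv : IsUnit (A₂ᵀ * Y₁))
    (M : Matrix (Fin n) (Fin (r + p)) ℝ)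
    (hM : M = Matrix.diagonal Λ * Matrix.diagonal Λ * Vᵀ * A₁) :
    specNorm (X - Y₁ * (A₂ᵀ * Y₁)⁻¹ * Y₂ᵀ) =
      specNorm (Matrix.diagonal Λ * (1 - M * (Mᵀ * M)⁻¹ * Mᵀ)) :=
  brp_error_eq_proj_residual_general U V Λ hU hV X hX A₁ A₂ hA₂ A₁' hA₁' Y₁ hY₁ Y₂ hY₂ M hM
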